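/- Let V be a finite-dimensional real vector space, J : V → V a linear map with J² = −id, and ω a nondegenerate alternating bilinear form on V satisfying ω(Ju, Jv) = ω(u,v) for all u,v; set b(u,v) = ω(u, Jv). Let S ⊆ V be a subspace that is ω-isotropic (ω(s,s') = 0 for all s,s' ∈ S) and such that the restriction of b to S × S is nondegenerate. Then, writing S^⊥ω = {v : ω(s,v) = 0 for all s ∈ S}: (i) V = S^⊥ω ⊕ J(S); (ii) S^⊥ω = S ⊕ W, where W = (S + J(S))^⊥ω; and (iii) W is J-invariant. -/
import Mathlib


variable {V : Type*} [AddCommGroup V] [Module ℝ V]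

/-- For a bilinear form `ω` on `V` and a subspace `S ⊆ V`,
`S^⊥ω = {v ∈ V : ω(s,v) = 0 for all s ∈ S}`. -/
def perpOmega (ω : V →ₗ[ℝ] V →ₗ[ℝ] ℝ) (S : Submodule ℝ V) : Submodule ℝ V where
  carrier := {v | ∀ s ∈ S, ω s v = 0}
  add_mem' := by
    intro a b ha hb s hs
    simp [ha s hs, hb s hs]
  zero_mem' := by
    intro s hs
    simp
  smul_mem' := by
    intro c v hv s hs
    simp [hv s hs]

theorem mem_perpOmega {ω : V →ₗ[ℝ] V →ₗ[ℝ] ℝ} {S : Submodule ℝ V} {v : V} :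
    v ∈ perpOmega ω S ↔ ∀ s ∈ S, ω s v = 0 := Iff.rfl

/-- Let `V` be a finite-dimensional real vector space, `J : V → V` linear with `J² = −id`,
`ω` a nondegenerate alternating bilinear form with `ω(Ju,Jv) = ω(u,v)`, and
`b(u,v) = ω(u,Jv)`. If `S ⊆ V` is `ω`-isotropic and `b` restricted to `S × S` is
nondegenerate then, with `W = (S + J(S))^⊥ω`:
(i) `V = S^⊥ω ⊕ J(S)`; (ii) `S^⊥ω = S ⊕ W`; (iii) `W` is `J`-invariant. -/
theorem perp_decomposition
    {V : Type*} [AddCommGroup V] [Module ℝ V] [FiniteDimensional ℝ V]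
    (J : V →ₗ[ℝ] V) (hJ : ∀ v : V, J (J v) = -v)
    (ω : V →ₗ[ℝ] V →ₗ[ℝ] ℝ)
    (halt : ∀ v : V, ω v v = 0)
    (hnd : ∀ v : V, (∀ w : V, ω v w = 0) → v = 0)
    (hJω : ∀ u v : V, ω (J u) (J v) = ω u v)
    (S : Submodule ℝ V)
    (hiso : ∀ s ∈ S, ∀ s' ∈ S, ω s s' = 0)
    (hbnd : ∀ s ∈ S, (∀ s' ∈ S, ω s (J s') = 0) → s = 0) :
    IsCompl (perpOmega ω S) (S.map J) ∧
      (perpOmega ω S = S ⊔ perpOmega ω (S ⊔ S.map J) ∧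
        S ⊓ perpOmega ω (S ⊔ S.map J) = ⊥) ∧
      (perpOmega ω (S ⊔ S.map J)).map J ≤ perpOmega ω (S ⊔ S.map J) := by
  -- antisymmetry of ω
  have hanti : ∀ u v : V, ω u v = -ω v u := by
    intro u v
    have h := halt (u + v)
    simp only [map_add, LinearMap.add_apply, halt u, halt v] at h
    linarith
  -- symmetry of b(u,v) = ω(u, Jv)
  have hsym : ∀ u v : V, ω u (J v) = ω v (J u) := by
    intro u v
    have h1 : ω (J u) (J (J v)) = ω u (J v) := hJω u (J v)
    rw [hJ v, map_neg] at h1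
    have h2 := hanti (J u) v
    linarith
  -- the bilinear form b restricted to S, as maps to the dual
  set B : ↥S →ₗ[ℝ] ↥S →ₗ[ℝ] ℝ := ω.compl₁₂ S.subtype (J.comp S.subtype) with hB
  set C : ↥S →ₗ[ℝ] ↥S →ₗ[ℝ] ℝ := ω.compl₁₂ (J.comp S.subtype) S.subtype with hC
  have hBapp : ∀ s s' : ↥S, B s s' = ω (s : V) (J (s' : V)) := fun s s' => rfl
  have hCapp : ∀ s s' : ↥S, C s s' = ω (J (s : V)) (s' : V) := fun s s' => rfl
  have hdual : Module.finrank ℝ ↥S = Module.finrank ℝ (Module.Dual ℝ ↥S) :=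
    Subspace.dual_finrank_eq.symm
  -- B.flip : s ↦ (s' ↦ ω s' (J s)) is injective, hence surjective
  have hBinj : Function.Injective (B.flip : ↥S →ₗ[ℝ] Module.Dual ℝ ↥S) := by
    rw [injective_iff_map_eq_zero]
    intro s hs
    have h0 : ∀ s' ∈ S, ω s (J s') = 0 := by
      intro s' hs'
      have := congrArg (fun f => f ⟨s', hs'⟩) hs
      simp only [LinearMap.flip_apply, hBapp, LinearMap.zero_apply] at this
      rw [hsym]
      exact this
    exact Subtype.ext (hbnd (s : V) s.2 h0)
  have hBsurj : Function.Surjective (B.flip : ↥S →ₗ[ℝ] Module.Dual ℝ ↥S) :=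
    (LinearMap.injective_iff_surjective_of_finrank_eq_finrank hdual).mp hBinj
  -- C.flip : s ↦ (s' ↦ ω (J s') s) is injective, hence surjective
  have hCinj : Function.Injective (C.flip : ↥S →ₗ[ℝ] Module.Dual ℝ ↥S) := by
    rw [injective_iff_map_eq_zero]
    intro s hs
    have h0 : ∀ s' ∈ S, ω s (J s') = 0 := by
      intro s' hs'
      have := congrArg (fun f => f ⟨s', hs'⟩) hs
      simp only [LinearMap.flip_apply, hCapp, LinearMap.zero_apply] at this
      have h2 := hanti (J s') (s : V)
      linarith
    exact Subtype.ext (hbnd (s : V) s.2 h0)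
  have hCsurj : Function.Surjective (C.flip : ↥S →ₗ[ℝ] Module.Dual ℝ ↥S) :=
    (LinearMap.injective_iff_surjective_of_finrank_eq_finrank hdual).mp hCinj
  -- disjointness of S^⊥ and J(S)
  have hdisj : Disjoint (perpOmega ω S) (S.map J) := by
    rw [Submodule.disjoint_def]
    intro x hx hxm
    obtain ⟨s, hs, rfl⟩ := hxm
    have h0 : ∀ s' ∈ S, ω s (J s') = 0 := by
      intro s' hs'
      rw [hsym]
      exact hx s' hs'
    rw [hbnd s hs h0, map_zero]
  have hSle : S ≤ perpOmega ω S := fun v hv s hs => hiso s hs v hv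
  refine ⟨⟨hdisj, ?_⟩, ⟨?_, ?_⟩, ?_⟩
  · -- codisjoint: every v decomposes
    rw [codisjoint_iff, eq_top_iff]
    intro v _
    obtain ⟨s, hsv⟩ := hBsurj ((ω.flip v).comp S.subtype)
    have hsv' : ∀ s' ∈ S, ω s' (J (s : V)) = ω s' v := by
      intro s' hs'
      have := congrArg (fun f => f ⟨s', hs'⟩) hsv
      simpa [hBapp] using this
    refine Submodule.mem_sup.mpr ⟨v - J s, ?_, J s, ⟨s, s.2, rfl⟩, by abel⟩
    intro s' hs'
    rw [map_sub, hsv' s' hs', sub_self]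
  · -- S^⊥ = S ⊔ W
    apply le_antisymm
    · intro p hp
      obtain ⟨s, hsp⟩ := hCsurj ((ω.flip p).comp (J.comp S.subtype))
      have hsp' : ∀ s' ∈ S, ω (J s') (s : V) = ω (J s') p := by
        intro s' hs'
        have := congrArg (fun f => f ⟨s', hs'⟩) hsp
        simpa [hCapp] using this
      refine Submodule.mem_sup.mpr ⟨(s : V), s.2, p - s, ?_, by abel⟩
      intro x hx
      obtain ⟨y, hy, z, hz, rfl⟩ := Submodule.mem_sup.mp hx
      obtain ⟨s', hs', rfl⟩ := hz
      rw [map_add, LinearMap.add_apply, map_sub, map_sub,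
        hp y hy, hiso y hy (s : V) s.2, hsp' s' hs']
      ring
    · refine sup_le hSle ?_
      intro w hw s hs
      exact hw s (Submodule.mem_sup_left hs)
  · -- S ⊓ W = ⊥
    rw [Submodule.eq_bot_iff]
    intro x ⟨hxS, hxW⟩
    refine hbnd x hxS ?_
    intro s' hs'
    have h0 := hxW (J s') (Submodule.mem_sup_right ⟨s', hs', rfl⟩)
    have h2 := hanti (J s') x
    linarith
  · -- J-invariance of W
    intro x hx
    obtain ⟨w, hw, rfl⟩ := Submodule.mem_map.mp hx
    intro y hy
    obtain ⟨a, ha, z, hz, rfl⟩ := Submodule.mem_sup.mp hy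
    obtain ⟨s', hs', rfl⟩ := hz
    have h1 : ω a (J w) = -ω (J a) w := by
      have := hJω a (J w)
      rw [hJ w, map_neg] at this
      linarith
    rw [map_add, LinearMap.add_apply, h1, hJω s' w,
      hw (J a) (Submodule.mem_sup_right ⟨a, ha, rfl⟩),
      hw s' (Submodule.mem_sup_left hs')]
    ring
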